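/- Let b and c be real numbers with b² < 4(1+c²), let λ± = (b ± i√(4(1+c²) − b²))/(2(1 − ic)), and let P be the 2×2 complex matrix with rows (λ₊, λ₋) and (1, 1). Then the eigenvalues of the Hermitian matrix P*P are 2(1 ± |b|/(2√(1+c²))); consequently, the spectral norm satisfies ‖P‖₂ = √(2 + |b|/√(1+c²)) < 2. -/

import Mathlib

/-!
Both roots `λ±` have modulus one, so `P*P = [[2, z], [z̄, 2]]` with `z = conj λ₊ * λ₋ + 1`, whose
eigenvalues are `2 ± |z|`. Since `conj λ₊ = λ₊⁻¹`, `|z| = |λ₊ + λ₋| = |b / (1 - ic)| = |b| / √(1+c²)`.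
As `P*P` is self-adjoint, `‖P‖₂² = ‖P*P‖₂` is its spectral radius `2 + |z|`.
-/

open Complex Matrix
open scoped Matrix.Norms.L2Operator ComplexConjugate

namespace Matrix

variable {n K : Type*} [Fintype n] [DecidableEq n] [Field K]

theorem mem_spectrum_iff_det_sub_smul_one_eq_zero (A : Matrix n n K) (μ : K) :
    μ ∈ spectrum K A ↔ (A - μ • 1).det = 0 := by
  rw [mem_spectrum_iff_isRoot_charpoly, Polynomial.IsRoot, eval_charpoly, ← neg_sub, det_neg,
    scalar_apply, ← smul_one_eq_diagonal, mul_eq_zero, or_iff_right (by simp)]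

theorem spectrum_eq_pair_of_det_sub_smul_one {A : Matrix n n K} {p q : K}
    (h : ∀ μ, (A - μ • 1).det = (p - μ) * (q - μ)) : spectrum K A = {p, q} := by
  ext μ
  rw [mem_spectrum_iff_det_sub_smul_one_eq_zero, h, mul_eq_zero, sub_eq_zero, sub_eq_zero,
    Set.mem_insert_iff, Set.mem_singleton_iff, eq_comm, @eq_comm _ q]

end Matrix

theorem IsSelfAdjoint.norm_eq_max_of_spectrum_eq_pair {A : Type*} [CStarAlgebra A] {a : A}
    (ha : IsSelfAdjoint a) {x y : ℂ} (h : spectrum ℂ a = {x, y}) : ‖a‖ = max ‖x‖ ‖y‖ := by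
  have := ha.spectralRadius_eq_nnnorm
  rw [spectralRadius, h, iSup_pair, ← ENNReal.coe_max, ENNReal.coe_inj] at this
  exact congrArg NNReal.toReal this.symm

theorem det_fin_two_hermitian_sub_smul_one (a : ℝ) (z μ : ℂ) :
    (!![(a : ℂ), z; conj z, a] - μ • 1).det = ((a + ‖z‖ : ℝ) - μ) * ((a - ‖z‖ : ℝ) - μ) := by
  simp [det_fin_two]
  linear_combination -mul_conj' z

section Unimodular

variable {x y : ℂ}

theorem conj_mul_self_of_norm_eq_one (hx : ‖x‖ = 1) : conj x * x = 1 := by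
  rw [mul_comm, mul_conj', hx]; simp

theorem conjTranspose_mul_self_of_unimodular (hx : ‖x‖ = 1) (hy : ‖y‖ = 1) :
    (!![x, y; 1, 1])ᴴ * !![x, y; 1, 1] =
      !![((2 : ℝ) : ℂ), conj x * y + 1; conj (conj x * y + 1), ((2 : ℝ) : ℂ)] := by
  ext i j
  fin_cases i <;> fin_cases j <;>
    simp [mul_apply, conj_mul_self_of_norm_eq_one hx, conj_mul_self_of_norm_eq_one hy] <;> ring

theorem norm_conj_mul_add_one (hx : ‖x‖ = 1) : ‖conj x * y + 1‖ = ‖x + y‖ := by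
  rw [← conj_mul_self_of_norm_eq_one hx, ← mul_add, norm_mul, norm_conj, hx, one_mul, add_comm]

theorem det_conjTranspose_mul_self_sub_smul_one_of_unimodular (hx : ‖x‖ = 1) (hy : ‖y‖ = 1)
    (μ : ℂ) :
    ((!![x, y; 1, 1])ᴴ * !![x, y; 1, 1] - μ • 1).det =
      ((2 + ‖x + y‖ : ℝ) - μ) * ((2 - ‖x + y‖ : ℝ) - μ) := by
  rw [conjTranspose_mul_self_of_unimodular hx hy, det_fin_two_hermitian_sub_smul_one,
    norm_conj_mul_add_one hx]

theorem l2_opNorm_of_unimodular (hx : ‖x‖ = 1) (hy : ‖y‖ = 1) : ‖!![x, y; 1, 1]‖ = √(2 + ‖x + y‖) := by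
  have hspec := spectrum_eq_pair_of_det_sub_smul_one
    (det_conjTranspose_mul_self_sub_smul_one_of_unimodular hx hy)
  have hnorm := (IsSelfAdjoint.star_mul_self !![x, y; 1, 1]).norm_eq_max_of_spectrum_eq_pair hspec
  have hs : 0 ≤ ‖x + y‖ := norm_nonneg _
  rw [star_eq_conjTranspose, norm_real, norm_real, Real.norm_of_nonneg (by linarith),
    max_eq_left (by rw [Real.norm_eq_abs, abs_le]; constructor <;> linarith)] at hnorm
  rw [← hnorm, l2_opNorm_conjTranspose_mul_self, Real.sqrt_mul_self (norm_nonneg _)]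

end Unimodular

theorem norm_root_eq_one {b c r : ℝ} (hr : b ^ 2 + r ^ 2 = 4 * (1 + c ^ 2)) :
    ‖(b + I * r) / (2 * (1 - I * c))‖ = 1 := by
  have hden : 2 * (1 - I * c) ≠ 0 := by
    intro h; simpa using congrArg re h
  rw [norm_div, div_eq_one_iff_eq (norm_ne_zero_iff.mpr hden), norm_def, norm_def]
  congr 1
  simp [normSq_apply]
  linarith

theorem norm_one_sub_I_mul (c : ℝ) : ‖1 - I * c‖ = √(1 + c ^ 2) := by
  rw [norm_def]; congr 1; simp [normSq_apply]; ring

theorem root_add_root (b c r : ℝ) :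
    (b + I * r) / (2 * (1 - I * c)) + (b - I * r) / (2 * (1 - I * c)) = b / (1 - I * c) := by
  have hden : 1 - I * c ≠ 0 := by
    intro h; simpa using congrArg re h
  field_simp; ring

theorem abs_div_sqrt_lt_two {b c : ℝ} (h : b ^ 2 < 4 * (1 + c ^ 2)) : |b| / √(1 + c ^ 2) < 2 := by
  rw [div_lt_iff₀ (Real.sqrt_pos.mpr (by positivity))]
  refine abs_lt_of_sq_lt_sq ?_ (by positivity)
  rw [mul_pow, Real.sq_sqrt (by positivity)]
  linarith

/-- With b² < 4(1+c²), λ± = (b ± i√(4(1+c²) − b²))/(2(1 − ic)) and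
P = [[λ₊, λ₋], [1, 1]], the eigenvalues of the Hermitian matrix P*P are
2(1 ± |b|/(2√(1+c²))); consequently the spectral norm satisfies
‖P‖₂ = √(2 + |b|/√(1+c²)) < 2. -/
theorem PstarP_eigenvalues_and_spectral_norm (b c : ℝ) (h : b ^ 2 < 4 * (1 + c ^ 2))
    (lamp lamm : ℂ)
    (hp : lamp = (b + I * Real.sqrt (4 * (1 + c ^ 2) - b ^ 2)) / (2 * (1 - I * c)))
    (hm : lamm = (b - I * Real.sqrt (4 * (1 + c ^ 2) - b ^ 2)) / (2 * (1 - I * c)))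
    (P : Matrix (Fin 2) (Fin 2) ℂ)
    (hP : P = !![lamp, lamm; 1, 1]) :
    (∀ μ : ℂ, (Pᴴ * P - μ • (1 : Matrix (Fin 2) (Fin 2) ℂ)).det = 0 ↔
      μ = (2 * (1 + |b| / (2 * Real.sqrt (1 + c ^ 2))) : ℝ) ∨
      μ = (2 * (1 - |b| / (2 * Real.sqrt (1 + c ^ 2))) : ℝ)) ∧
    ‖P‖ = Real.sqrt (2 + |b| / Real.sqrt (1 + c ^ 2)) ∧
    ‖P‖ < 2 := by
  subst hp hm hP
  set r := √(4 * (1 + c ^ 2) - b ^ 2)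
  have hr : b ^ 2 + r ^ 2 = 4 * (1 + c ^ 2) := by rw [Real.sq_sqrt (by linarith)]; ring
  have hp : ‖(b + I * r) / (2 * (1 - I * c))‖ = 1 := norm_root_eq_one hr
  have hm : ‖(b - I * r) / (2 * (1 - I * c))‖ = 1 := by
    simpa [sub_eq_add_neg] using norm_root_eq_one (r := -r) (by rwa [neg_sq])
  have hsum : ‖(b + I * r) / (2 * (1 - I * c)) + (b - I * r) / (2 * (1 - I * c))‖ =
      |b| / √(1 + c ^ 2) := by
    rw [root_add_root, norm_div, norm_one_sub_I_mul, norm_real, Real.norm_eq_abs]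
  refine ⟨fun μ => ?_, ?_, ?_⟩
  · rw [← mem_spectrum_iff_det_sub_smul_one_eq_zero,
      spectrum_eq_pair_of_det_sub_smul_one (det_conjTranspose_mul_self_sub_smul_one_of_unimodular hp hm),
      hsum, Set.mem_insert_iff, Set.mem_singleton_iff]
    ring_nf
  · rw [l2_opNorm_of_unimodular hp hm, hsum]
  · rw [l2_opNorm_of_unimodular hp hm, hsum, Real.sqrt_lt' two_pos]
    linarith [abs_div_sqrt_lt_two h]
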